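/- arXiv:1003.1536 — 6 statements merged into one kernel-verified Lean document; each statement's English description precedes it below -/
import Mathlib

section
/- Let μ be the Haar probability measure on X_L and let x ∈ ℤ², x ≠ 0. Then for all choices ε, ε' ∈ {±1}, μ{ w ∈ X_L | w(0) = ε and w(x) = ε' } = 1/4. -/
/-! Translating by an element `v ∈ X_L` moves the cylinder `{w 0 = a, w x = b}` onto
`{w 0 = v 0 * a, w x = v x * b}` without changing its measure, so it suffices that the pairs
`(v 0, v x)`, `v ∈ X_L`, exhaust `{±1}²`; then the four cylinders partitioning the space have equal
measure. Reading `X_L` additively over `𝔽₂`, the relation says that row `n + 1` is obtained from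
row `n` by the Pascal rule, so a single `-1` in row `0` spreads into Pascal's triangle mod 2, which
extends to negative rows through binomial coefficients with negative upper index. Such a
configuration, or its transpose when `x` lies on the vertical axis, separates `0` from `x`. -/

open MeasureTheory

def LedrappierSet : Set ((ℤ × ℤ) → ℤˣ) :=
  {w | ∀ x : ℤ × ℤ, w x * w (x + (1, 0)) * w (x + (0, 1)) = 1}

section TwoPointCylinders

variable {ι G : Type*} [MeasurableSpace G]

theorem sum_measure_cylinder [Fintype G] [MeasurableSingletonClass G]
    (μ : Measure (ι → G)) (i j : ι) :
    ∑ p : G × G, μ {w | w i = p.1 ∧ w j = p.2} = μ Set.univ := by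
  have hf : Measurable fun w : ι → G => (w i, w j) :=
    (measurable_pi_apply i).prodMk (measurable_pi_apply j)
  simpa [Set.preimage, Prod.ext_iff] using
    sum_measure_preimage_singleton Finset.univ fun p _ => hf (measurableSet_singleton p)

variable [Group G] [MeasurableMul G]

theorem measure_cylinder_mul_eq {μ : Measure (ι → G)} {v : ι → G}
    (hv : Measure.map (fun w => v * w) μ = μ) (i j : ι) (a b : G) :
    μ {w | w i = v i * a ∧ w j = v j * b} = μ {w | w i = a ∧ w j = b} := by
  conv_lhs => rw [← hv]
  rw [show (fun w => v * w) = MeasurableEquiv.mulLeft v from rfl, MeasurableEquiv.map_apply]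
  simp [Set.preimage]

theorem card_mul_measure_cylinder_eq [Fintype G] [MeasurableSingletonClass G]
    (μ : Measure (ι → G)) (H : Set (ι → G)) (hinv : ∀ v ∈ H, Measure.map (fun w => v * w) μ = μ) (i j : ι)
    (hsurj : ∀ a b : G, ∃ v ∈ H, v i = a ∧ v j = b) (a b : G) :
    Fintype.card (G × G) * μ {w | w i = a ∧ w j = b} = μ Set.univ := by
  have hconst (p : G × G) :
      μ {w | w i = p.1 ∧ w j = p.2} = μ {w | w i = a ∧ w j = b} := by
    obtain ⟨v, hv, hvi, hvj⟩ := hsurj (p.1 * a⁻¹) (p.2 * b⁻¹)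
    simpa [hvi, hvj] using measure_cylinder_mul_eq (hinv v hv) i j a b
  rw [← sum_measure_cylinder μ i j, Finset.sum_congr rfl fun p _ => hconst p,
    Finset.sum_const, Finset.card_univ, nsmul_eq_mul]

end TwoPointCylinders

theorem one_mem_ledrappierSet : (1 : (ℤ × ℤ) → ℤˣ) ∈ LedrappierSet := fun _ => by simp

theorem mul_mem_ledrappierSet {u v : (ℤ × ℤ) → ℤˣ} (hu : u ∈ LedrappierSet)
    (hv : v ∈ LedrappierSet) : u * v ∈ LedrappierSet := fun y => by
  simp only [Pi.mul_apply]
  calc u y * v y * (u (y + (1, 0)) * v (y + (1, 0))) * (u (y + (0, 1)) * v (y + (0, 1)))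
      = (u y * u (y + (1, 0)) * u (y + (0, 1))) * (v y * v (y + (1, 0)) * v (y + (0, 1))) := by
        ac_rfl
    _ = 1 := by rw [hu y, hv y, mul_one]

theorem comp_swap_mem_ledrappierSet {w : (ℤ × ℤ) → ℤˣ} (hw : w ∈ LedrappierSet) :
    w ∘ Prod.swap ∈ LedrappierSet := fun ⟨m, n⟩ => by
  have h := hw (n, m)
  simp only [Prod.mk_add_mk, add_zero] at h ⊢
  simpa [mul_right_comm] using h

/-- `intChoose n k` is the coefficient of `t ^ k` in `(1 + t) ^ n`, for all integers `n`. -/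
def intChoose (n k : ℤ) : ℤ :=
  if 0 ≤ k then Ring.choose n k.toNat else 0

theorem intChoose_add_one (n k : ℤ) :
    intChoose (n + 1) k = intChoose n k + intChoose n (k - 1) := by
  unfold intChoose
  rcases lt_trichotomy k 0 with hk | rfl | hk
  · rw [if_neg (by omega), if_neg (by omega), if_neg (by omega), add_zero]
  · simp
  · obtain ⟨k, rfl⟩ : ∃ k' : ℕ, k = k' + 1 := ⟨k.toNat - 1, by omega⟩
    rw [if_pos hk.le, if_pos hk.le, add_sub_cancel_right, if_pos k.cast_nonneg,
      show ((k : ℤ) + 1).toNat = k + 1 by omega, Int.toNat_natCast, Ring.choose_succ_succ, add_comm]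

theorem intChoose_zero_right (n : ℤ) : intChoose n 0 = 1 := by
  simp [intChoose]

theorem intChoose_zero_left {k : ℤ} (hk : k ≠ 0) : intChoose 0 k = 0 := by
  unfold intChoose
  split_ifs with h
  · rw [show k.toNat = k.toNat - 1 + 1 by omega]
    exact Ring.choose_zero_succ ℤ _
  · rfl

/-- The Ledrappier configuration grown from a single `-1` at `(m₀, 0)`: Pascal's triangle mod 2,
continued to negative rows. -/
def pascalConfig (m₀ : ℤ) (p : ℤ × ℤ) : ℤˣ :=
  (-1) ^ intChoose p.2 (m₀ - p.1)

theorem pascalConfig_mem_ledrappierSet (m₀ : ℤ) : pascalConfig m₀ ∈ LedrappierSet :=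
  fun ⟨m, n⟩ => by
    simp only [pascalConfig, Prod.mk_add_mk, add_zero, ← zpow_add, intChoose_add_one,
      show m₀ - (m + 1) = m₀ - m - 1 by ring]
    rw [← two_mul, zpow_mul]
    simp

theorem pascalConfig_apply_zero {m₀ : ℤ} (h : m₀ ≠ 0) : pascalConfig m₀ (0, 0) = 1 := by
  simp [pascalConfig, intChoose_zero_left h]

theorem pascalConfig_apply_self (m₀ n : ℤ) : pascalConfig m₀ (m₀, n) = -1 := by
  simp [pascalConfig, intChoose_zero_right]

theorem exists_mem_ledrappierSet_one_neg_one {x : ℤ × ℤ} (hx : x ≠ 0) :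
    ∃ u ∈ LedrappierSet, u (0, 0) = 1 ∧ u x = -1 := by
  obtain ⟨a, b⟩ := x
  by_cases ha : a = 0
  · subst ha
    have hb : b ≠ 0 := fun hb => hx (by simp [hb])
    exact ⟨pascalConfig b ∘ Prod.swap, comp_swap_mem_ledrappierSet
      (pascalConfig_mem_ledrappierSet b), pascalConfig_apply_zero hb, pascalConfig_apply_self b 0⟩
  · exact ⟨pascalConfig a, pascalConfig_mem_ledrappierSet a, pascalConfig_apply_zero ha,
      pascalConfig_apply_self a b⟩

theorem exists_mem_ledrappierSet_one {x : ℤ × ℤ} (hx : x ≠ 0) (b : ℤˣ) :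
    ∃ u ∈ LedrappierSet, u (0, 0) = 1 ∧ u x = b := by
  rcases Int.units_eq_one_or b with rfl | rfl
  · exact ⟨1, one_mem_ledrappierSet, rfl, rfl⟩
  · exact exists_mem_ledrappierSet_one_neg_one hx

theorem exists_mem_ledrappierSet {x : ℤ × ℤ} (hx : x ≠ 0) (a b : ℤˣ) :
    ∃ u ∈ LedrappierSet, u (0, 0) = a ∧ u x = b := by
  rcases Int.units_eq_one_or a with rfl | rfl
  · exact exists_mem_ledrappierSet_one hx b
  · set v := pascalConfig 0
    obtain ⟨u, hu, hu0, hux⟩ := exists_mem_ledrappierSet_one hx ((v x)⁻¹ * b)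
    refine ⟨v * u, mul_mem_ledrappierSet (pascalConfig_mem_ledrappierSet 0) hu, ?_, ?_⟩
    · simp [v, hu0, pascalConfig_apply_self]
    · simp only [Pi.mul_apply, hux, mul_inv_cancel_left]

instance : DiscreteMeasurableSpace ℤˣ :=
  ⟨fun s => ⟨Units.val '' s, .of_discrete, Set.preimage_image_eq s Units.val_injective⟩⟩

theorem ledrappier_twopoint_cylinders_general (μ : Measure ((ℤ × ℤ) → ℤˣ))
    [IsProbabilityMeasure μ]
    (hinv : ∀ v ∈ LedrappierSet, Measure.map (fun w => v * w) μ = μ)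
    (x : ℤ × ℤ) (hx : x ≠ 0) :
    ∀ ε ε' : ℤˣ, μ {w | w (0, 0) = ε ∧ w x = ε'} = 1 / 4 := by
  intro ε ε'
  have h := card_mul_measure_cylinder_eq μ LedrappierSet hinv (0, 0) x
    (exists_mem_ledrappierSet hx) ε ε'
  rw [measure_univ, show Fintype.card (ℤˣ × ℤˣ) = 4 by decide] at h
  rw [ENNReal.eq_div_iff (by norm_num) (by norm_num)]
  exact_mod_cast h

/-- Under the Haar probability measure of `X_L`, every two-point cylinder set
determined by the values at `0` and at some `x ≠ 0` has measure `1/4`. -/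
theorem ledrappier_twopoint_cylinders (μ : Measure ((ℤ × ℤ) → ℤˣ))
    [IsProbabilityMeasure μ] (hsupp : μ LedrappierSet = 1)
    (hinv : ∀ v ∈ LedrappierSet, Measure.map (fun w => v * w) μ = μ)
    (x : ℤ × ℤ) (hx : x ≠ 0) :
    ∀ ε ε' : ℤˣ, μ {w | w (0, 0) = ε ∧ w x = ε'} = 1 / 4 :=
  ledrappier_twopoint_cylinders_general μ hinv x hx
end

section
/- For every x ∈ ℤ² with x ≠ 0, there exists w ∈ X_L with w(0) = 1 and w(x) = -1. -/
/-!
`LedrappierSet` is closed under pointwise products, translations and the swap of coordinates,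
and contains `(-1) ^ f` for every `f : ℤ × ℤ → ℤ` satisfying the defining relation modulo `2`.
Two such `f` give the building blocks. One is Pascal's triangle `(a, b) ↦ choose b (-a)`, zero for
`a > 0`; with the generalized binomial coefficient `Ring.choose`, Pascal's rule holds for all
`b ∈ ℤ`. It equals `1` on the column `a = 0`, so, after a translation or swap, it separates `0`
from any `x ≠ 0`. The other is the indicator of `3 ∤ a - b + c`, of period `3` along the
diagonals: for `c = 0` it already works when `3 ∤ x.1 - x.2`, and otherwise, for `c = 1`, it is
`1` at both `0` and `x`, so adding it repairs a separating configuration with the wrong sign.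
-/

namespace LedrappierSet

theorem mul_mem {v w : ℤ × ℤ → ℤˣ} (hv : v ∈ LedrappierSet) (hw : w ∈ LedrappierSet) :
    v * w ∈ LedrappierSet := fun p => by
  calc v p * w p * (v (p + (1, 0)) * w (p + (1, 0))) * (v (p + (0, 1)) * w (p + (0, 1)))
      = v p * v (p + (1, 0)) * v (p + (0, 1)) * (w p * w (p + (1, 0)) * w (p + (0, 1))) := by
        ac_rfl
    _ = 1 := by rw [hv p, hw p, one_mul]

theorem comp_add_right_mem {w : ℤ × ℤ → ℤˣ} (hw : w ∈ LedrappierSet) (t : ℤ × ℤ) :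
    (fun y => w (y + t)) ∈ LedrappierSet := fun p => by
  simpa only [add_right_comm p _ t] using hw (p + t)

theorem comp_swap_mem {w : ℤ × ℤ → ℤˣ} (hw : w ∈ LedrappierSet) :
    w ∘ Prod.swap ∈ LedrappierSet := fun p => by
  simpa [mul_right_comm] using hw p.swap

theorem neg_one_zpow_mem {f : ℤ × ℤ → ℤ}
    (hf : ∀ p, Even (f p + f (p + (1, 0)) + f (p + (0, 1)))) :
    (fun p => (-1 : ℤˣ) ^ f p) ∈ LedrappierSet := fun p => by
  simp only [← zpow_add, (hf p).neg_one_zpow]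

end LedrappierSet

namespace Ledrappier

def pascalExponent (p : ℤ × ℤ) : ℤ :=
  if p.1 ≤ 0 then Ring.choose p.2 (-p.1).toNat else 0

theorem even_pascalExponent_add (p : ℤ × ℤ) :
    Even (pascalExponent p + pascalExponent (p + (1, 0)) + pascalExponent (p + (0, 1))) := by
  obtain ⟨a, b⟩ := p
  simp only [pascalExponent, Prod.mk_add_mk, add_zero]
  rcases lt_trichotomy a 0 with ha | rfl | ha
  · obtain ⟨k, rfl⟩ : ∃ k : ℕ, a = -(k + 1) := ⟨(-a - 1).toNat, by omega⟩
    have hk : (-(-((k : ℤ) + 1) + 1)).toNat = k := by omega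
    rw [if_pos (by omega), if_pos (by omega), if_pos (by omega), hk, neg_neg,
      show ((k : ℤ) + 1).toNat = k + 1 by omega, Ring.choose_succ_succ]
    exact ⟨Ring.choose b k + Ring.choose b (k + 1), by ring⟩
  · simp
  · simp [show ¬a ≤ 0 by omega, show ¬a + 1 ≤ 0 by omega]

def pascal (p : ℤ × ℤ) : ℤˣ := (-1) ^ pascalExponent p

theorem pascal_mem : pascal ∈ LedrappierSet :=
  LedrappierSet.neg_one_zpow_mem even_pascalExponent_add

theorem pascal_zero_mk (b : ℤ) : pascal (0, b) = -1 := by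
  simp [pascal, pascalExponent]

theorem pascal_of_fst_pos {p : ℤ × ℤ} (hp : 0 < p.1) : pascal p = 1 := by
  simp [pascal, pascalExponent, show ¬p.1 ≤ 0 by omega]

def diagonal (c : ℤ) (p : ℤ × ℤ) : ℤˣ :=
  if (3 : ℤ) ∣ p.1 - p.2 + c then 1 else -1

theorem diagonal_mem (c : ℤ) : diagonal c ∈ LedrappierSet := fun ⟨a, b⟩ => by
  simp only [diagonal, Prod.mk_add_mk, add_zero]
  split_ifs <;> first | omega | simp

theorem exists_mem_apply_ne_of_fst_ne_zero {x : ℤ × ℤ} (hx : x.1 ≠ 0) :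
    ∃ w ∈ LedrappierSet, w (0, 0) ≠ w x := by
  rcases hx.lt_or_gt with hx | hx
  · refine ⟨fun y => pascal (y + -x), LedrappierSet.comp_add_right_mem pascal_mem (-x), ?_⟩
    show pascal ((0, 0) + -x) ≠ pascal (x + -x)
    rw [pascal_of_fst_pos (by simpa using hx), add_neg_cancel, ← Prod.mk_zero_zero, pascal_zero_mk]
    decide
  · exact ⟨pascal, pascal_mem, by simp [pascal_zero_mk, pascal_of_fst_pos hx]⟩

theorem exists_mem_apply_ne {x : ℤ × ℤ} (hx : x ≠ 0) :
    ∃ w ∈ LedrappierSet, w (0, 0) ≠ w x := by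
  by_cases hx₁ : x.1 = 0
  · obtain ⟨w, hw, hne⟩ := exists_mem_apply_ne_of_fst_ne_zero (x := x.swap)
      fun hx₂ => hx (Prod.ext hx₁ hx₂)
    exact ⟨w ∘ Prod.swap, LedrappierSet.comp_swap_mem hw, by simpa using hne⟩
  · exact exists_mem_apply_ne_of_fst_ne_zero hx₁

end Ledrappier

/-- For every nonzero `x ∈ ℤ²` there is a Ledrappier configuration with
value `1` at the origin and `-1` at `x`. -/
theorem ledrappier_exists_separating (x : ℤ × ℤ) (hx : x ≠ 0) :
    ∃ w ∈ LedrappierSet, w (0, 0) = 1 ∧ w x = -1 := by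
  by_cases h3 : (3 : ℤ) ∣ x.1 - x.2
  · obtain ⟨w, hw, hne⟩ := Ledrappier.exists_mem_apply_ne hx
    rcases Int.units_eq_one_or (w (0, 0)) with h0 | h0
    · exact ⟨w, hw, h0, (Int.units_eq_one_or _).resolve_left (h0 ▸ hne).symm⟩
    · have hwx : w x = 1 := (Int.units_eq_one_or _).resolve_right (h0 ▸ hne).symm
      refine ⟨w * Ledrappier.diagonal 1,
        LedrappierSet.mul_mem hw (Ledrappier.diagonal_mem 1), ?_, ?_⟩
      · simp [Ledrappier.diagonal, h0]
      · simp [Ledrappier.diagonal, hwx, show ¬(3 : ℤ) ∣ x.1 - x.2 + 1 by omega]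
  · exact ⟨Ledrappier.diagonal 0, Ledrappier.diagonal_mem 0,
      by simp [Ledrappier.diagonal], by simp [Ledrappier.diagonal, h3]⟩
end

section
/- Let μ be the Haar probability measure on X_L and A = { w ∈ X_L | w(0) = 1 }. Then for all n ≥ 0, μ( A ∩ α^{(-2ⁿ,0)}A ∩ α^{(0,-2ⁿ)}A ) = 1/4. In particular, this quantity does not converge to μ(A)³ = 1/8 as n → ∞, so the shift action is not 3-mixing. -/
open MeasureTheory Filter

/-- The shift action `(α^z w)(x) = w(x+z)`. -/
def shiftMap (z : ℤ × ℤ) (w : (ℤ × ℤ) → ℤˣ) : (ℤ × ℤ) → ℤˣ := fun x => w (x + z)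

instance inst_s6 : DiscreteMeasurableSpace ℤˣ := by
  constructor
  intro s
  show MeasurableSet[MeasurableSpace.comap _ _] s
  refine ⟨Units.val '' s, trivial, ?_⟩
  ext u
  simp only [Set.mem_preimage, Set.mem_image]
  exact ⟨fun ⟨x, hx, hxu⟩ => (Units.ext hxu) ▸ hx, fun h => ⟨u, h, rfl⟩⟩

lemma ledrappier_doubling {w : (ℤ × ℤ) → ℤˣ} (hw : w ∈ LedrappierSet) (n : ℕ) :
    ∀ x : ℤ × ℤ, w x * w (x + ((2 : ℤ) ^ n, 0)) * w (x + (0, (2 : ℤ) ^ n)) = 1 := by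
  induction n with
  | zero =>
    intro x
    have h := hw x
    simpa using h
  | succ k ih =>
    intro x
    have h1 := ih x
    have h2 := ih (x + ((2 : ℤ) ^ k, 0))
    have h3 := ih (x + (0, (2 : ℤ) ^ k))
    have e1 : x + ((2 : ℤ) ^ k, 0) + ((2 : ℤ) ^ k, 0) = x + ((2 : ℤ) ^ (k + 1), 0) := by
      simp [Prod.ext_iff]; ring
    have e2 : x + (0, (2 : ℤ) ^ k) + (0, (2 : ℤ) ^ k) = x + (0, (2 : ℤ) ^ (k + 1)) := by
      simp [Prod.ext_iff]; ring
    have e3 : x + ((2 : ℤ) ^ k, 0) + (0, (2 : ℤ) ^ k) = x + (0, (2 : ℤ) ^ k) + ((2 : ℤ) ^ k, 0) :=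
      add_right_comm x ((2 : ℤ) ^ k, 0) (0, (2 : ℤ) ^ k)
    rw [e1, e3] at h2
    rw [e2] at h3
    have key : ∀ a b c d e f : ℤˣ, a * b * c = 1 → b * d * e = 1 → c * e * f = 1 →
        a * d * f = 1 := by decide
    exact key _ _ _ _ _ _ h1 h2 h3

lemma shift_image (z a : ℤ × ℤ) :
    shiftMap z '' {w : (ℤ × ℤ) → ℤˣ | w a = 1} = {w : (ℤ × ℤ) → ℤˣ | w (a - z) = 1} := by
  ext w'
  constructor
  · rintro ⟨w, hw, rfl⟩
    show (shiftMap z w) (a - z) = 1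
    simpa [shiftMap, sub_add_cancel] using hw
  · intro h
    refine ⟨shiftMap (-z) w', ?_, ?_⟩
    · show w' (a + -z) = 1
      simpa [sub_eq_add_neg] using h
    · funext x
      show w' (x + z + -z) = w' x
      simp

lemma ledrappier_diag_mem (s : ZMod 3 → ℤˣ) (hs : s 0 * s 1 * s 2 = 1) :
    (fun x : ℤ × ℤ => s ((x.1 : ZMod 3) - (x.2 : ZMod 3))) ∈ LedrappierSet := by
  have key : ∀ t : ZMod 3, s t * s (t + 1) * s (t - 1) = 1 := by
    intro t
    have h3 := (by decide : ∀ t : ZMod 3, t = 0 ∨ t = 1 ∨ t = 2) t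
    rcases h3 with rfl | rfl | rfl
    · rw [show (0 : ZMod 3) + 1 = 1 from by decide, show (0 : ZMod 3) - 1 = 2 from by decide]
      exact hs
    · rw [show (1 : ZMod 3) + 1 = 2 from by decide, show (1 : ZMod 3) - 1 = 0 from by decide]
      exact (mul_rotate (s 0) (s 1) (s 2)).symm.trans hs
    · rw [show (2 : ZMod 3) + 1 = 0 from by decide, show (2 : ZMod 3) - 1 = 1 from by decide]
      exact (mul_rotate (s 2) (s 0) (s 1)).trans hs
  intro x
  simp only [Prod.fst_add, Prod.snd_add, Int.cast_add, Int.cast_one, Int.cast_zero,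
    add_zero]
  have e1 : (x.1 : ZMod 3) + 1 - x.2 = ((x.1 : ZMod 3) - x.2) + 1 := by ring
  have e2 : (x.1 : ZMod 3) - (x.2 + 1) = ((x.1 : ZMod 3) - x.2) - 1 := by ring
  rw [e1, e2]
  exact key _

lemma sprod_aux (ε δ : ℤˣ) : ∀ c : ZMod 3, c ≠ 0 →
    (if (0 : ZMod 3) = 0 then ε else if (0 : ZMod 3) = c then δ else ε * δ) *
    (if (1 : ZMod 3) = 0 then ε else if (1 : ZMod 3) = c then δ else ε * δ) *
    (if (2 : ZMod 3) = 0 then ε else if (2 : ZMod 3) = c then δ else ε * δ) = 1 := by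
  rcases Int.units_eq_one_or ε with rfl | rfl <;>
    rcases Int.units_eq_one_or δ with rfl | rfl <;> decide

/-- With `μ` the Haar probability measure of `X_L` and `A = {w | w 0 = 1}`, the
measure of `A ∩ α^{(-2ⁿ,0)}A ∩ α^{(0,-2ⁿ)}A` equals `1/4` for all `n ≥ 0`;
in particular it does not converge to `μ(A)³ = 1/8`, so the shift is not
`3`-mixing. -/
theorem ledrappier_not_three_mixing (μ : Measure ((ℤ × ℤ) → ℤˣ))
    [IsProbabilityMeasure μ] (hsupp : μ LedrappierSet = 1)
    (hinv : ∀ v ∈ LedrappierSet, Measure.map (fun w => v * w) μ = μ)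
    (A : Set ((ℤ × ℤ) → ℤˣ)) (hA : A = {w | w (0, 0) = 1}) :
    (∀ n : ℕ,
      μ (A ∩ shiftMap (-(2 : ℤ) ^ n, 0) '' A ∩ shiftMap (0, -(2 : ℤ) ^ n) '' A) = 1 / 4) ∧
    ¬ Tendsto
        (fun n : ℕ =>
          μ (A ∩ shiftMap (-(2 : ℤ) ^ n, 0) '' A ∩ shiftMap (0, -(2 : ℤ) ^ n) '' A))
        atTop (nhds (1 / 8)) := by
  have hL : MeasurableSet LedrappierSet := by
    have : LedrappierSet =
        ⋂ x : ℤ × ℤ, (fun w : (ℤ × ℤ) → ℤˣ =>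
          w x * w (x + (1, 0)) * w (x + (0, 1))) ⁻¹' {1} := by
      ext w; simp [LedrappierSet, Set.mem_iInter]
    rw [this]
    refine MeasurableSet.iInter fun x => ?_
    have hm : Measurable (fun w : (ℤ × ℤ) → ℤˣ =>
        w x * w (x + (1, 0)) * w (x + (0, 1))) := by
      have h3 : Measurable (fun w : (ℤ × ℤ) → ℤˣ =>
          (w x, w (x + (1, 0)), w (x + (0, 1)))) :=
        (measurable_pi_apply x).prodMk
          ((measurable_pi_apply _).prodMk (measurable_pi_apply _))
      exact (Measurable.of_discrete (f := fun p : ℤˣ × ℤˣ × ℤˣ => p.1 * p.2.1 * p.2.2)).comp h3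
    exact hm (MeasurableSet.of_discrete)
  have main : ∀ n : ℕ,
      μ (A ∩ shiftMap (-(2 : ℤ) ^ n, 0) '' A ∩ shiftMap (0, -(2 : ℤ) ^ n) '' A) = 1 / 4 := by
    intro n
    set p : ℤ × ℤ := ((2 : ℤ) ^ n, 0) with hp
    set q : ℤ × ℤ := (0, (2 : ℤ) ^ n) with hq
    -- T ε δ : two-point cylinder sets
    set T : ℤˣ → ℤˣ → Set ((ℤ × ℤ) → ℤˣ) :=
      fun ε δ => {w | w (0, 0) = ε ∧ w p = δ} with hT
    have hTmeas : ∀ ε δ, MeasurableSet (T ε δ) := by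
      intro ε δ
      have : T ε δ = (fun w : (ℤ × ℤ) → ℤˣ => w (0, 0)) ⁻¹' {ε} ∩
          (fun w : (ℤ × ℤ) → ℤˣ => w p) ⁻¹' {δ} := by
        ext w; simp [hT]
      rw [this]
      exact ((measurable_pi_apply _) (MeasurableSet.of_discrete)).inter
        ((measurable_pi_apply _) (MeasurableSet.of_discrete))
    -- the flipping elements
    have hc : ((2 : ℤ) ^ n : ZMod 3) ≠ 0 := by
      push_cast
      exact pow_ne_zero n (by decide)
    have hflip : ∀ ε δ : ℤˣ, μ (T ε δ) = μ (T 1 1) := by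
      intro ε δ
      set c : ZMod 3 := ((2 : ℤ) ^ n : ZMod 3) with hcdef
      set s : ZMod 3 → ℤˣ := fun t => if t = 0 then ε else if t = c then δ else ε * δ with hs
      have hs0 : s 0 = ε := by simp [hs]
      have hsc : s c = δ := by simp [hs, hc]
      have hsprod : s 0 * s 1 * s 2 = 1 := sprod_aux ε δ c hc
      set v : (ℤ × ℤ) → ℤˣ := fun x => s ((x.1 : ZMod 3) - (x.2 : ZMod 3)) with hv
      have hvL : v ∈ LedrappierSet := ledrappier_diag_mem s hsprod
      have hv0 : v (0, 0) = ε := by simp [hv, hs0]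
      have hvp : v p = δ := by
        show s ((p.1 : ZMod 3) - (p.2 : ZMod 3)) = δ
        have he : ((p.1 : ZMod 3) - (p.2 : ZMod 3)) = c := by
          rw [hp, hcdef]; simp
        rw [he]; exact hsc
      have hmeasmul : Measurable (fun w : (ℤ × ℤ) → ℤˣ => v * w) := by
        refine measurable_pi_lambda _ fun x => ?_
        have : (fun w : (ℤ × ℤ) → ℤˣ => (v * w) x) = (fun u : ℤˣ => v x * u) ∘
            (fun w : (ℤ × ℤ) → ℤˣ => w x) := rfl
        rw [this]
        exact (Measurable.of_discrete).comp (measurable_pi_apply x)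
      have hmap := hinv v hvL
      have hpre : (fun w : (ℤ × ℤ) → ℤˣ => v * w) ⁻¹' (T ε δ) = T 1 1 := by
        ext w
        have hsq : ∀ u : ℤˣ, u * u = 1 := Int.units_mul_self
        simp only [hT, Set.mem_preimage, Set.mem_setOf_eq, Pi.mul_apply, hv0, hvp]
        constructor
        · rintro ⟨h1, h2⟩
          constructor
          · have := congrArg (fun u => ε * u) h1
            simpa [← mul_assoc, hsq ε] using this
          · have := congrArg (fun u => δ * u) h2
            simpa [← mul_assoc, hsq δ] using this
        · rintro ⟨h1, h2⟩
          rw [h1, h2, mul_one, mul_one]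
          exact ⟨rfl, rfl⟩
      calc μ (T ε δ) = (Measure.map (fun w => v * w) μ) (T ε δ) := by rw [hmap]
        _ = μ ((fun w : (ℤ × ℤ) → ℤˣ => v * w) ⁻¹' (T ε δ)) :=
            Measure.map_apply hmeasmul (hTmeas ε δ)
        _ = μ (T 1 1) := by rw [hpre]
    -- the four sets partition the space
    have hpart : μ (T 1 1) + μ (T 1 (-1)) + μ (T (-1) 1) + μ (T (-1) (-1)) = 1 := by
      have hd1 : Disjoint (T 1 1) (T 1 (-1)) := by
        rw [Set.disjoint_left]; rintro w ⟨_, h2⟩ ⟨_, h4⟩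
        rw [h2] at h4; exact absurd h4 (by decide)
      have hd2 : Disjoint (T 1 1 ∪ T 1 (-1)) (T (-1) 1) := by
        rw [Set.disjoint_left]; rintro w (⟨h1, _⟩ | ⟨h1, _⟩) ⟨h3, _⟩ <;>
          (rw [h1] at h3; exact absurd h3 (by decide))
      have hd3 : Disjoint (T 1 1 ∪ T 1 (-1) ∪ T (-1) 1) (T (-1) (-1)) := by
        rw [Set.disjoint_left]; rintro w ((⟨h1, h2⟩ | ⟨h1, h2⟩) | ⟨h1, h2⟩) ⟨h3, h4⟩
        · rw [h1] at h3; exact absurd h3 (by decide)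
        · rw [h1] at h3; exact absurd h3 (by decide)
        · rw [h2] at h4; exact absurd h4 (by decide)
      have hunion : T 1 1 ∪ T 1 (-1) ∪ T (-1) 1 ∪ T (-1) (-1) = Set.univ := by
        ext w
        simp only [Set.mem_union, Set.mem_univ, iff_true, hT, Set.mem_setOf_eq]
        rcases Int.units_eq_one_or (w (0, 0)) with h1 | h1 <;>
          rcases Int.units_eq_one_or (w p) with h2 | h2 <;> tauto
      have e1 : μ (T 1 1 ∪ T 1 (-1)) = μ (T 1 1) + μ (T 1 (-1)) :=
        measure_union hd1 (hTmeas _ _)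
      have e2 : μ (T 1 1 ∪ T 1 (-1) ∪ T (-1) 1) = μ (T 1 1) + μ (T 1 (-1)) + μ (T (-1) 1) := by
        rw [measure_union hd2 (hTmeas _ _), e1]
      have e3 : μ (T 1 1 ∪ T 1 (-1) ∪ T (-1) 1 ∪ T (-1) (-1)) =
          μ (T 1 1) + μ (T 1 (-1)) + μ (T (-1) 1) + μ (T (-1) (-1)) := by
        rw [measure_union hd3 (hTmeas _ _), e2]
      rw [← e3, hunion, measure_univ]
    have hT11 : μ (T 1 1) = 1 / 4 := by
      rw [hflip 1 (-1), hflip (-1) 1, hflip (-1) (-1)] at hpart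
      rw [show μ (T 1 1) + μ (T 1 1) + μ (T 1 1) + μ (T 1 1) = 4 * μ (T 1 1) by ring] at hpart
      rw [ENNReal.eq_div_iff (by norm_num) (by norm_num)]
      exact hpart
    -- identify the set in question
    have himg1 : shiftMap (-(2 : ℤ) ^ n, 0) '' A = {w : (ℤ × ℤ) → ℤˣ | w p = 1} := by
      rw [hA, shift_image]
      have : ((0, 0) : ℤ × ℤ) - (-(2 : ℤ) ^ n, 0) = p := by simp [hp, Prod.ext_iff]
      rw [this]
    have himg2 : shiftMap (0, -(2 : ℤ) ^ n) '' A = {w : (ℤ × ℤ) → ℤˣ | w q = 1} := by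
      rw [hA, shift_image]
      have : ((0, 0) : ℤ × ℤ) - (0, -(2 : ℤ) ^ n) = q := by simp [hq, Prod.ext_iff]
      rw [this]
    set S : Set ((ℤ × ℤ) → ℤˣ) :=
      A ∩ shiftMap (-(2 : ℤ) ^ n, 0) '' A ∩ shiftMap (0, -(2 : ℤ) ^ n) '' A with hS
    have hScap : S ∩ LedrappierSet = T 1 1 ∩ LedrappierSet := by
      rw [hS, himg1, himg2, hA]
      have ep : ((0, 0) : ℤ × ℤ) + ((2 : ℤ) ^ n, 0) = p := by simp [hp, Prod.ext_iff]
      have eq' : ((0, 0) : ℤ × ℤ) + (0, (2 : ℤ) ^ n) = q := by simp [hq, Prod.ext_iff]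
      ext w
      simp only [Set.mem_inter_iff, Set.mem_setOf_eq, hT]
      constructor
      · rintro ⟨⟨⟨h1, h2⟩, _⟩, hw⟩
        exact ⟨⟨h1, h2⟩, hw⟩
      · rintro ⟨⟨h1, h2⟩, hw⟩
        refine ⟨⟨⟨h1, h2⟩, ?_⟩, hw⟩
        have h := ledrappier_doubling hw n (0, 0)
        rw [ep, eq', h1, h2, one_mul, one_mul] at h
        exact h
    have hcompl : μ LedrappierSetᶜ = 0 := by
      have := measure_compl hL (measure_ne_top μ _)
      rw [hsupp, measure_univ] at this
      simpa using this
    have hinter : ∀ B : Set ((ℤ × ℤ) → ℤˣ), μ B = μ (B ∩ LedrappierSet) := by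
      intro B
      have h1 := measure_inter_add_diff (μ := μ) B hL
      have h2 : μ (B \ LedrappierSet) = 0 :=
        measure_mono_null (Set.diff_subset_compl _ _) hcompl
      rw [h2, add_zero] at h1
      exact h1.symm
    rw [hinter S, hScap, ← hinter (T 1 1), hT11]
  refine ⟨main, ?_⟩
  intro h
  have h' : Tendsto (fun _ : ℕ => (1 / 4 : ENNReal)) atTop (nhds (1 / 8)) := by
    have : (fun n : ℕ =>
        μ (A ∩ shiftMap (-(2 : ℤ) ^ n, 0) '' A ∩ shiftMap (0, -(2 : ℤ) ^ n) '' A)) =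
        fun _ : ℕ => (1 / 4 : ENNReal) := funext main
    rwa [this] at h
  have := tendsto_nhds_unique h' tendsto_const_nhds
  have hne : (1 / 4 : ENNReal) ≠ 1 / 8 := by
    intro hcontra
    rw [ENNReal.div_eq_div_iff (by norm_num) (by norm_num) (by norm_num) (by norm_num)]
      at hcontra
    norm_num at hcontra
  exact hne this.symm
end

section
/- Let μ_F be the Haar probability measure on X_F. For z = (m,n) ∈ ℤ² with m,n ≥ 0 and (m,n) ≠ (0,0), ∫_{X_F} conj(w(0))·w(z) dμ_F(w) = 0. -/
/-!
Multiplying every coordinate of `w` by a fixed point `v ∈ X_F` multiplies the integrand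
`conj (w 0) * w z` by `conj (v 0) * v z`, while the integral is unchanged. The points
`z ↦ exp (i θ 2^a 3^b)` lie in `X_F`, and for `z = (a, b)` with `K = 2^a 3^b ≠ 1` the choice
`θ = π / (K - 1)` makes that factor `-1`, so the integral equals its own negative.
-/

open MeasureTheory

noncomputable instance : MeasurableSpace Circle := borel Circle

def XF : Set ((ℤ × ℤ) → Circle) :=
  {w | ∀ z : ℤ × ℤ, w (z + (1, 0)) = w z ^ 2 ∧ w (z + (0, 1)) = w z ^ 3}

instance : BorelSpace Circle := ⟨rfl⟩

theorem integral_eq_zero_of_map_eq_self_of_comp_eq_neg {α E : Type*} [MeasurableSpace α]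
    [NormedAddCommGroup E] [NormedSpace ℝ E] {μ : Measure α} {T : α → α} {f : α → E}
    (hT : AEMeasurable T μ) (hμ : μ.map T = μ) (hf : AEStronglyMeasurable f μ)
    (hfT : ∀ x, f (T x) = -f x) : ∫ x, f x ∂μ = 0 := by
  have hcomp := integral_map hT (hμ.symm ▸ hf)
  simp only [hμ, hfT, integral_neg] at hcomp
  have : IsAddTorsionFree E := .of_isTorsionFree ℝ E
  exact self_eq_neg.mp hcomp

lemma Circle.coe_exp_pi : (Circle.exp Real.pi : ℂ) = -1 := by
  rw [Circle.coe_exp, Complex.exp_pi_mul_I]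

namespace XF

noncomputable def expPoint (θ : ℝ) : (ℤ × ℤ) → Circle :=
  fun z => Circle.exp (θ * ((2 : ℝ) ^ z.1 * (3 : ℝ) ^ z.2))

lemma expPoint_mem (θ : ℝ) : expPoint θ ∈ XF := by
  intro z
  simp only [expPoint, Prod.fst_add, Prod.snd_add, ← Circle.exp_natCast_mul,
    zpow_add₀ (two_ne_zero' ℝ), zpow_add₀ (three_ne_zero' ℝ)]
  constructor <;> congr 1 <;> push_cast <;> ring

lemma inv_expPoint_zero_mul_expPoint (θ : ℝ) (z : ℤ × ℤ) :
    (expPoint θ (0, 0))⁻¹ * expPoint θ z =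
      Circle.exp (θ * ((2 : ℝ) ^ z.1 * (3 : ℝ) ^ z.2 - 1)) := by
  simp only [expPoint, zpow_zero, mul_one, mul_sub, Circle.exp_sub]
  exact inv_mul_eq_div _ _

end XF

theorem integral_conj_apply_zero_mul_apply_eq_zero (μ : Measure ((ℤ × ℤ) → Circle))
    (hinv : ∀ v ∈ XF, Measure.map (fun w => v * w) μ = μ)
    (z : ℤ × ℤ) (hz : (2 : ℝ) ^ z.1 * (3 : ℝ) ^ z.2 ≠ 1) :
    ∫ w, (starRingEnd ℂ) (w (0, 0) : ℂ) * (w z : ℂ) ∂μ = 0 := by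
  set v := XF.expPoint (Real.pi / ((2 : ℝ) ^ z.1 * (3 : ℝ) ^ z.2 - 1))
  have hv : (((v (0, 0))⁻¹ * v z : Circle) : ℂ) = -1 := by
    rw [XF.inv_expPoint_zero_mul_expPoint, div_mul_cancel₀ _ (sub_ne_zero.mpr hz),
      Circle.coe_exp_pi]
  simp_rw [← Circle.coe_inv_eq_conj, ← Circle.coe_mul]
  refine integral_eq_zero_of_map_eq_self_of_comp_eq_neg (by fun_prop)
    (hinv v (XF.expPoint_mem _)) (by fun_prop) fun w => ?_
  rw [neg_eq_neg_one_mul, ← hv, ← Circle.coe_mul, Pi.mul_apply, Pi.mul_apply, mul_inv,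
    mul_mul_mul_comm]

lemma two_pow_mul_three_pow_ne_one {m n : ℕ} (hmn : (m, n) ≠ (0, 0)) :
    (2 : ℝ) ^ (m : ℤ) * (3 : ℝ) ^ (n : ℤ) ≠ 1 := by
  have hnat : 2 ^ m * 3 ^ n ≠ 1 := by
    rw [Ne, mul_eq_one, pow_eq_one_iff_right (by norm_num), pow_eq_one_iff_right (by norm_num)]
    simpa using hmn
  exact_mod_cast hnat

theorem xf_autocorrelation_vanishes_first_quadrant_general
    (μF : Measure ((ℤ × ℤ) → Circle))
    (hinv : ∀ v ∈ XF, Measure.map (fun w => v * w) μF = μF)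
    (m n : ℕ) (hmn : (m, n) ≠ (0, 0)) :
    ∫ w, (starRingEnd ℂ) (w (0, 0) : ℂ) * ((w ((m : ℤ), (n : ℤ)) : ℂ)) ∂μF = 0 :=
  integral_conj_apply_zero_mul_apply_eq_zero μF hinv _ (two_pow_mul_three_pow_ne_one hmn)

/-- For the Haar probability measure on `X_F` and `z = (m,n)` with
`m, n ≥ 0` and `(m,n) ≠ (0,0)`, the autocorrelation integral
`∫ conj(w(0))·w(z) dμ_F` vanishes. -/
theorem xf_autocorrelation_vanishes_first_quadrant
    (μF : Measure ((ℤ × ℤ) → Circle)) [IsProbabilityMeasure μF]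
    (hsupp : μF XF = 1)
    (hinv : ∀ v ∈ XF, Measure.map (fun w => v * w) μF = μF)
    (m n : ℕ) (hmn : (m, n) ≠ (0, 0)) :
    ∫ w, (starRingEnd ℂ) (w (0, 0) : ℂ) * ((w ((m : ℤ), (n : ℤ)) : ℂ)) ∂μF = 0 :=
  xf_autocorrelation_vanishes_first_quadrant_general μF hinv m n hmn
end

section
/- Let μ_F be the Haar probability measure on X_F and let z = (m,n) with m ≥ 0 and n < 0. Then ∫_{X_F} conj(w(0))·w(z) dμ_F(w) = 0. -/
open MeasureTheory

lemma exp_mem_XF (θ : ℝ) :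
    (fun p : ℤ × ℤ => Circle.exp (θ * 2 ^ p.1 * 3 ^ p.2)) ∈ XF := by
  rintro ⟨x, y⟩
  constructor
  · have h : ((x, y) + (1, 0) : ℤ × ℤ) = (x + 1, y) := by simp
    rw [h]
    show Circle.exp (θ * 2 ^ (x + 1) * 3 ^ y) = Circle.exp (θ * 2 ^ x * 3 ^ y) ^ 2
    rw [zpow_add_one₀ (two_ne_zero)]
    have e : θ * ((2:ℝ) ^ x * 2) * 3 ^ y
        = θ * 2 ^ x * 3 ^ y + θ * 2 ^ x * 3 ^ y := by ring
    rw [e, Circle.exp_add, sq]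
  · have h : ((x, y) + (0, 1) : ℤ × ℤ) = (x, y + 1) := by simp
    rw [h]
    show Circle.exp (θ * 2 ^ x * 3 ^ (y + 1)) = Circle.exp (θ * 2 ^ x * 3 ^ y) ^ 3
    rw [zpow_add_one₀ (three_ne_zero)]
    have e : θ * (2:ℝ) ^ x * ((3:ℝ) ^ y * 3)
        = θ * 2 ^ x * 3 ^ y + (θ * 2 ^ x * 3 ^ y + θ * 2 ^ x * 3 ^ y) := by ring
    rw [e, Circle.exp_add, Circle.exp_add, pow_succ, sq]
    exact (mul_assoc _ _ _).symm

/-- For the Haar probability measure on `X_F` and `z = (m,n)` with `m ≥ 0`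
and `n < 0`, the autocorrelation integral `∫ conj(w(0))·w(z) dμ_F` vanishes. -/
theorem xf_autocorrelation_vanishes_fourth_quadrant
    (μF : Measure ((ℤ × ℤ) → Circle)) [IsProbabilityMeasure μF]
    (hsupp : μF XF = 1)
    (hinv : ∀ v ∈ XF, Measure.map (fun w => v * w) μF = μF)
    (m : ℕ) (n : ℤ) (hn : n < 0) :
    ∫ w, (starRingEnd ℂ) (w (0, 0) : ℂ) * ((w ((m : ℤ), n) : ℂ)) ∂μF = 0 := by
  set f : ((ℤ × ℤ) → Circle) → ℂ :=
    fun w => (starRingEnd ℂ) (w (0, 0) : ℂ) * ((w ((m : ℤ), n) : ℂ)) with hf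
  -- the constant `a = 2^m 3^n - 1` is nonzero
  obtain ⟨k, hk, hk1⟩ : ∃ k : ℕ, n = -(k : ℤ) ∧ 1 ≤ k := by
    refine ⟨(-n).toNat, ?_, ?_⟩ <;> omega
  have hne : (2:ℝ) ^ (m:ℤ) * 3 ^ n ≠ 1 := by
    intro h
    rw [hk, zpow_neg, zpow_natCast, zpow_natCast] at h
    have h3k : (0:ℝ) < 3 ^ k := by positivity
    have h2 : (2:ℝ) ^ m = 3 ^ k := by
      field_simp at h
      linarith
    have h3 : (2:ℕ) ^ m = 3 ^ k := by exact_mod_cast h2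
    have hd : (3:ℕ) ∣ 2 ^ m := h3 ▸ dvd_pow_self 3 (by omega : k ≠ 0)
    have := Nat.Prime.dvd_of_dvd_pow (p := 3) (by norm_num) hd
    omega
  set a : ℝ := 2 ^ (m:ℤ) * 3 ^ n - 1 with ha
  have ha0 : a ≠ 0 := sub_ne_zero.mpr hne
  set θ : ℝ := Real.pi / a with hθ
  set v : (ℤ × ℤ) → Circle := fun p => Circle.exp (θ * 2 ^ p.1 * 3 ^ p.2) with hv
  have hvXF : v ∈ XF := exp_mem_XF θ
  -- the key scaling identity
  have hscale : ∀ w, f (v * w) = -(f w) := by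
    intro w
    have e0 : ((v * w) (0, 0) : ℂ) = Complex.exp ((θ:ℂ) * Complex.I) * (w (0, 0) : ℂ) := by
      simp [hv, Circle.coe_exp]
    have e1 : ((v * w) ((m:ℤ), n) : ℂ)
        = Complex.exp ((θ * 2 ^ (m:ℤ) * 3 ^ n : ℝ) * Complex.I) * (w ((m:ℤ), n) : ℂ) := by
      simp [hv, Circle.coe_exp]
    simp only [hf, e0, e1, map_mul]
    rw [← Complex.exp_conj]
    have hconj : (starRingEnd ℂ) ((θ:ℂ) * Complex.I) = -((θ:ℂ) * Complex.I) := by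
      simp [Complex.conj_I]
    rw [hconj]
    have hmul : Complex.exp (-((θ:ℂ) * Complex.I))
        * Complex.exp ((θ * 2 ^ (m:ℤ) * 3 ^ n : ℝ) * Complex.I)
        = Complex.exp ((θ * a : ℝ) * Complex.I) := by
      rw [← Complex.exp_add]
      congr 1
      push_cast [ha]
      ring
    have hθa : θ * a = Real.pi := div_mul_cancel₀ _ ha0
    have hm1 : Complex.exp (-((θ:ℂ) * Complex.I))
        * Complex.exp ((θ * 2 ^ (m:ℤ) * 3 ^ n : ℝ) * Complex.I) = -1 := by
      rw [hmul, hθa]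
      exact Complex.exp_pi_mul_I
    linear_combination ((starRingEnd ℂ) (w (0, 0) : ℂ) * (w ((m:ℤ), n) : ℂ)) * hm1
  -- measurability
  have hcoe : Measurable (fun z : Circle => (z : ℂ)) := by
    apply Continuous.measurable
    exact continuous_subtype_val
  have h1 : Measurable fun w : (ℤ × ℤ) → Circle => (w (0, 0) : ℂ) :=
    hcoe.comp (measurable_pi_apply _)
  have h2 : Measurable fun w : (ℤ × ℤ) → Circle => (w ((m:ℤ), n) : ℂ) :=
    hcoe.comp (measurable_pi_apply _)
  have hfm : Measurable f := (continuous_star.measurable.comp h1).mul h2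
  have hvm : Measurable fun w : (ℤ × ℤ) → Circle => v * w := by
    apply measurable_pi_lambda
    intro p
    exact (measurable_const_mul (v p)).comp (measurable_pi_apply p)
  have key : ∫ w, f w ∂μF = -∫ w, f w ∂μF := by
    conv_lhs => rw [← hinv v hvXF]
    rw [integral_map hvm.aemeasurable
      ((hinv v hvXF).symm ▸ hfm.aestronglyMeasurable)]
    simp_rw [hscale]
    exact integral_neg f
  have hz : ∫ w, f w ∂μF = 0 := by linear_combination key / 2
  exact hz
end

section
/- Let z₁,…,zₙ ∈ ℤ² with zⱼ = (kⱼ, ℓⱼ), let m₁,…,mₙ ∈ ℤ, and let μ_F be Haar measure on X_F. Then ∫_{X_F} ∏ⱼ w(zⱼ)^{mⱼ} dμ_F(w) = 1 if ∑_{j=1}^n mⱼ·2^{kⱼ}·3^{ℓⱼ} = 0 (as a rational number), and = 0 otherwise. -/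
/-!
The integrand is a continuous character `χ` of the compact group `ℤ × ℤ → Circle`.
If `∑ mⱼ 2^kⱼ 3^ℓⱼ = 0`, then `χ` is trivial on `XF`: below a common lower-left corner `y`
every `w (zⱼ)` is a power `w y ^ Nⱼ` with `Nⱼ 2^y₁ 3^y₂ = 2^kⱼ 3^ℓⱼ`, so `χ w = w y ^ ∑ mⱼ Nⱼ = 1`.
Otherwise the point `z ↦ exp (i t 2^z₁ 3^z₂)` of `XF`, with `t = π / ∑ mⱼ 2^kⱼ 3^ℓⱼ`, has `χ = -1`,
and invariance of `μF` under translation by it gives `∫ χ = -∫ χ`.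
-/

open MeasureTheory

theorem Finset.prod_zpow_eq_zpow_sum {G ι : Type*} [CommGroup G] (s : Finset ι) (x : G)
    (f : ι → ℤ) : ∏ i ∈ s, x ^ f i = x ^ ∑ i ∈ s, f i := by
  classical
  induction s using Finset.induction_on with
  | empty => simp
  | insert i s hi ih => rw [prod_insert hi, sum_insert hi, ih, zpow_add]

theorem Circle.exp_sum {ι : Type*} (s : Finset ι) (f : ι → ℝ) :
    Circle.exp (∑ i ∈ s, f i) = ∏ i ∈ s, Circle.exp (f i) :=
  map_sum Circle.expHom f s

theorem integral_coe_monoidHom_eq_zero {G : Type*} [MulOneClass G] [MeasurableSpace G]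
    [MeasurableMul G] {μ : Measure G} {v : G} (hv : μ.map (v * ·) = μ) {χ : G →* Circle}
    (hχ : Measurable χ) (hχv : χ v ≠ 1) :
    ∫ w, (χ w : ℂ) ∂μ = 0 := by
  have hfix : (χ v : ℂ) * ∫ w, (χ w : ℂ) ∂μ = ∫ w, (χ w : ℂ) ∂μ :=
    calc (χ v : ℂ) * ∫ w, (χ w : ℂ) ∂μ = ∫ w, (χ (v * w) : ℂ) ∂μ := by
          simp only [map_mul, Circle.coe_mul, integral_const_mul]
      _ = ∫ w, (χ w : ℂ) ∂(μ.map (v * ·)) :=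
          (integral_map (measurable_const_mul v).aemeasurable
            (by fun_prop : Measurable fun w => (χ w : ℂ)).aestronglyMeasurable).symm
      _ = ∫ w, (χ w : ℂ) ∂μ := by rw [hv]
  by_contra hne
  exact hχv (Circle.coe_inj.mp ((mul_eq_right₀ hne).mp hfix))

namespace XF

theorem isClosed : IsClosed XF := by
  simp only [XF, Set.ofPred_forall, Set.ofPred_and]
  exact isClosed_iInter fun z => (isClosed_eq (by fun_prop) (by fun_prop)).inter
    (isClosed_eq (by fun_prop) (by fun_prop))

theorem measurableSet : MeasurableSet XF := isClosed.measurableSet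

variable {w : (ℤ × ℤ) → Circle}

theorem apply_add_fst (hw : w ∈ XF) (y : ℤ × ℤ) (p : ℕ) :
    w (y + ((p : ℤ), 0)) = w y ^ 2 ^ p := by
  induction p with
  | zero => simp [Prod.mk_zero_zero]
  | succ p ih =>
    rw [show y + (((p + 1 : ℕ) : ℤ), 0) = y + ((p : ℤ), 0) + (1, 0) by ext <;> simp [add_assoc],
      (hw _).1, ih, ← pow_mul, pow_succ]

theorem apply_add_snd (hw : w ∈ XF) (y : ℤ × ℤ) (q : ℕ) :
    w (y + (0, (q : ℤ))) = w y ^ 3 ^ q := by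
  induction q with
  | zero => simp [Prod.mk_zero_zero]
  | succ q ih =>
    rw [show y + (0, ((q + 1 : ℕ) : ℤ)) = y + (0, (q : ℤ)) + (0, 1) by ext <;> simp [add_assoc],
      (hw _).2, ih, ← pow_mul, pow_succ]

theorem exists_pow_of_le (hw : w ∈ XF) {y z : ℤ × ℤ} (h : y ≤ z) :
    ∃ N : ℕ, w z = w y ^ N ∧ (N : ℚ) * 2 ^ y.1 * 3 ^ y.2 = 2 ^ z.1 * 3 ^ z.2 := by
  obtain ⟨p, hp⟩ := Int.le.dest h.1
  obtain ⟨q, hq⟩ := Int.le.dest h.2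
  have hz : z = y + ((p : ℤ), 0) + (0, (q : ℤ)) := by ext <;> simp [← hp, ← hq]
  refine ⟨2 ^ p * 3 ^ q, ?_, ?_⟩
  · rw [hz, apply_add_snd hw, apply_add_fst hw, ← pow_mul]
  · rw [← hp, ← hq, zpow_add₀ two_ne_zero, zpow_add₀ three_ne_zero, zpow_natCast, zpow_natCast]
    push_cast
    ring

end XF

noncomputable def circleOrbit (t : ℝ) : (ℤ × ℤ) → Circle :=
  fun z => Circle.exp (t * 2 ^ z.1 * 3 ^ z.2)

theorem circleOrbit_mem_XF (t : ℝ) : circleOrbit t ∈ XF := by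
  intro z
  simp only [circleOrbit, Prod.fst_add, Prod.snd_add, add_zero,
    zpow_add_one₀ (two_ne_zero (α := ℝ)), zpow_add_one₀ (three_ne_zero (α := ℝ)),
    ← Circle.exp_natCast_mul]
  constructor <;> congr 1 <;> push_cast <;> ring

noncomputable def correlationChar {ι : Type*} [Fintype ι] (z : ι → ℤ × ℤ) (m : ι → ℤ) :
    ((ℤ × ℤ) → Circle) →* Circle :=
  ∏ i, Pi.evalMonoidHom (fun _ => Circle) (z i) ^ m i

section correlationChar

variable {ι : Type*} [Fintype ι] (z : ι → ℤ × ℤ) (m : ι → ℤ)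

theorem correlationChar_apply (w : (ℤ × ℤ) → Circle) :
    correlationChar z m w = ∏ i, w (z i) ^ m i := by
  simp [correlationChar]

theorem coe_correlationChar_apply (w : (ℤ × ℤ) → Circle) :
    (correlationChar z m w : ℂ) = ∏ i, (w (z i) : ℂ) ^ m i := by
  rw [correlationChar_apply]
  exact map_prod Circle.coeHom (fun i => w (z i) ^ m i) _

theorem continuous_correlationChar : Continuous (correlationChar z m) := by
  simp only [funext (correlationChar_apply z m)]
  fun_prop

theorem correlationChar_eq_one {w : (ℤ × ℤ) → Circle} (hw : w ∈ XF)
    (h : ∑ i, (m i : ℚ) * 2 ^ (z i).1 * 3 ^ (z i).2 = 0) : correlationChar z m w = 1 := by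
  obtain ⟨y, hy⟩ := (Set.finite_range z).bddBelow
  choose N hN hNw using fun i => XF.exists_pow_of_le hw (hy (Set.mem_range_self i))
  have hsum : ((∑ i, (N i : ℤ) * m i : ℤ) : ℚ) * (2 ^ y.1 * 3 ^ y.2) = 0 := by
    rw [← h]
    push_cast
    rw [Finset.sum_mul]
    exact Finset.sum_congr rfl fun i _ => by linear_combination (m i : ℚ) * hNw i
  have hsum' := Int.cast_eq_zero.mp ((mul_eq_zero.mp hsum).resolve_right (by positivity))
  simp_rw [correlationChar_apply, hN, ← zpow_natCast, ← zpow_mul, Finset.prod_zpow_eq_zpow_sum,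
    hsum', zpow_zero]

theorem correlationChar_circleOrbit (t : ℝ) :
    correlationChar z m (circleOrbit t) =
      Circle.exp (t * ∑ i, (m i : ℝ) * 2 ^ (z i).1 * 3 ^ (z i).2) := by
  rw [correlationChar_apply, Finset.mul_sum, Circle.exp_sum]
  refine Finset.prod_congr rfl fun i _ => ?_
  rw [circleOrbit, ← Circle.exp_intCast_mul]
  ring_nf

theorem exists_mem_XF_correlationChar_ne_one
    (h : ∑ i, (m i : ℚ) * 2 ^ (z i).1 * 3 ^ (z i).2 ≠ 0) :
    ∃ v ∈ XF, correlationChar z m v ≠ 1 := by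
  have hR : ∑ i, (m i : ℝ) * 2 ^ (z i).1 * 3 ^ (z i).2 ≠ 0 := by
    rw [← Rat.cast_ne_zero (α := ℝ)] at h
    push_cast at h
    exact h
  refine ⟨circleOrbit (Real.pi / ∑ i, (m i : ℝ) * 2 ^ (z i).1 * 3 ^ (z i).2),
    circleOrbit_mem_XF _, ?_⟩
  rw [correlationChar_circleOrbit, div_mul_cancel₀ _ hR]
  exact Circle.exp_pi_ne_one

end correlationChar

/-- The generalized correlation integrals of the `(×2,×3)`-shift:
`∫ ∏ⱼ w(kⱼ,ℓⱼ)^{mⱼ} dμ_F` equals `1` if `∑ⱼ mⱼ·2^{kⱼ}·3^{ℓⱼ} = 0` in `ℚ`,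
and `0` otherwise. -/
theorem xf_generalized_correlations
    (μF : Measure ((ℤ × ℤ) → Circle)) [IsProbabilityMeasure μF]
    (hsupp : μF XF = 1)
    (hinv : ∀ v ∈ XF, Measure.map (fun w => v * w) μF = μF)
    {n : ℕ} (k l m : Fin n → ℤ) :
    ∫ w, (∏ j, ((w (k j, l j) : ℂ) ^ (m j))) ∂μF =
      if (∑ j, (m j : ℚ) * 2 ^ (k j) * 3 ^ (l j)) = 0 then 1 else 0 := by
  set χ := correlationChar (fun j => (k j, l j)) m
  have hχ : ∀ w, ∏ j, (w (k j, l j) : ℂ) ^ m j = χ w :=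
    fun w => (coe_correlationChar_apply _ m w).symm
  simp_rw [hχ]
  split_ifs with hS
  · have hXF : ∀ᵐ w ∂μF, w ∈ XF := by
      rw [ae_mem_iff_measure_eq XF.measurableSet.nullMeasurableSet, hsupp, measure_univ]
    have hone : ∀ᵐ w ∂μF, (χ w : ℂ) = 1 := hXF.mono fun w hw => by
      rw [correlationChar_eq_one _ m hw hS, Circle.coe_one]
    simp [integral_congr_ae hone]
  · obtain ⟨v, hv, hχv⟩ := exists_mem_XF_correlationChar_ne_one (fun j => (k j, l j)) m hS
    exact integral_coe_monoidHom_eq_zero (hinv v hv) (continuous_correlationChar _ m).measurable hχv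
end
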